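/- Let X and Y be random variables with values in ℝ^m and ℝ^n, let μ and ν be finite symmetric Lévy measures on ℝ^m∖{0} and ℝ^n∖{0}, both with full support, with associated continuous negative definite functions Φ(x) = ∫(1 − cos⟨x,s⟩) μ(ds) and Ψ(y) = ∫(1 − cos⟨y,t⟩) ν(dt), and let (X_i, Y_i), i = 1,…,4, be i.i.d. copies of (X,Y). Then the generalized distance covariance satisfies V²(X,Y) = E[(Φ(X₁ − X₄) − Φ(X₄ − X₂)) · (Ψ(Y₄ − Y₁) − Ψ(Y₁ − Y₃))]. -/

import Mathlib

open MeasureTheory ProbabilityTheory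
open scoped ENNReal RealInnerProductSpace

/-- `ρ` is symmetric: `ρ(B) = ρ(-B)` for all Borel sets `B`. -/
def IsSymmetricMeasure {d : ℕ} (ρ : Measure (EuclideanSpace ℝ (Fin d))) : Prop :=
  ρ.map (fun r => -r) = ρ

/-- `ρ` has full (topological) support on `ℝ^d ∖ {0}`. -/
def HasFullSupportOffZero {d : ℕ} (ρ : Measure (EuclideanSpace ℝ (Fin d))) : Prop :=
  ∀ G : Set (EuclideanSpace ℝ (Fin d)), IsOpen G → G.Nonempty →
    (0 : EuclideanSpace ℝ (Fin d)) ∉ G → 0 < ρ G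

/-- The real-valued continuous negative definite function
`Θ(u) = ∫ (1 - cos ⟪u, r⟫) ρ(dr)` associated to a finite measure `ρ`. -/
noncomputable def realCndf {d : ℕ} (ρ : Measure (EuclideanSpace ℝ (Fin d)))
    (u : EuclideanSpace ℝ (Fin d)) : ℝ :=
  ∫ r, (1 - Real.cos ⟪u, r⟫) ∂ρ

/-- The characteristic function `f_U(r) = E[exp(i ⟪r, U⟫)]` of a random variable `U`. -/
noncomputable def charFn {d : ℕ} {Ω : Type*} [MeasurableSpace Ω] (P : Measure Ω)
    (U : Ω → EuclideanSpace ℝ (Fin d)) (r : EuclideanSpace ℝ (Fin d)) : ℂ :=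
  ∫ ω, Complex.exp (Complex.I * (⟪r, U ω⟫ : ℝ)) ∂P

/-- The joint characteristic function `f_{(X,Y)}(s,t) = E[exp(i(⟪s,X⟫ + ⟪t,Y⟫))]`. -/
noncomputable def jointCharFn {m n : ℕ} {Ω : Type*} [MeasurableSpace Ω] (P : Measure Ω)
    (X : Ω → EuclideanSpace ℝ (Fin m)) (Y : Ω → EuclideanSpace ℝ (Fin n))
    (s : EuclideanSpace ℝ (Fin m)) (t : EuclideanSpace ℝ (Fin n)) : ℂ :=
  ∫ ω, Complex.exp (Complex.I * ((⟪s, X ω⟫ + ⟪t, Y ω⟫ : ℝ))) ∂P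

/-- The generalized distance covariance
`V²(X,Y) = ∬ |f_{(X,Y)}(s,t) - f_X(s) f_Y(t)|² μ(ds) ν(dt)`. -/
noncomputable def gdCov {m n : ℕ} (μ : Measure (EuclideanSpace ℝ (Fin m)))
    (ν : Measure (EuclideanSpace ℝ (Fin n))) {Ω : Type*} [MeasurableSpace Ω]
    (P : Measure Ω) (X : Ω → EuclideanSpace ℝ (Fin m))
    (Y : Ω → EuclideanSpace ℝ (Fin n)) : ℝ≥0∞ :=
  ∫⁻ s, ∫⁻ t,
    (‖jointCharFn P X Y s t - charFn P X s * charFn P Y t‖₊ : ℝ≥0∞) ^ 2 ∂ν ∂μ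


/-! Write `D(s,t) = f(s,t) - f(s,0) f(0,t)` for the joint characteristic function `f` of `(X,Y)`,
and put `α = e^{i⟨X₁-X₄,s⟩} - e^{i⟨X₄-X₂,s⟩}`, `β = e^{i⟨Y₄-Y₁,t⟩} - e^{i⟨Y₁-Y₃,t⟩}`.
Expanding `αβ` into characters of `(X_k, Y_k)_k` and using independence,
`Re E[αβ] = |D(s,t)|² + |f(s,-t)|² - |f(s,t)|²`. Since `β(-t) = conj β(t)`,
`Re α · Re β = (Re (α β(t)) + Re (α β(-t))) / 2`, so the cross terms cancel and
`E[Re α · Re β] = (|D(s,t)|² + |D(s,-t)|²) / 2`; the symmetry of `ν` identifies the two halves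
after integration. On the other side, `∫ (cos⟨a,s⟩ - cos⟨b,s⟩) μ(ds) = Φ(b) - Φ(a)`, so Fubini
turns `∬ Re α · Re β dμ dν` into the product of differences of `Φ` and `Ψ`. -/

open ComplexConjugate

section

variable {E F : Type*} [NormedAddCommGroup E] [InnerProductSpace ℝ E]
  [NormedAddCommGroup F] [InnerProductSpace ℝ F]

noncomputable def cosDiff (a b s : E) : ℝ := Real.cos ⟪a, s⟫ - Real.cos ⟪b, s⟫

noncomputable def expDiff (a b s : E) : ℂ :=
  Complex.exp (Complex.I * ⟪a, s⟫) - Complex.exp (Complex.I * ⟪b, s⟫)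

lemma cosDiff_eq_re_expDiff (a b s : E) : cosDiff a b s = (expDiff a b s).re := by
  simp [cosDiff, expDiff, mul_comm Complex.I, Complex.exp_ofReal_mul_I_re]

lemma expDiff_neg (a b s : E) : expDiff a b (-s) = conj (expDiff a b s) := by
  simp [expDiff, ← Complex.exp_conj, inner_neg_right]

lemma abs_cosDiff_le (a b s : E) : |cosDiff a b s| ≤ 2 :=
  (abs_sub _ _).trans (by linarith [Real.abs_cos_le_one ⟪a, s⟫, Real.abs_cos_le_one ⟪b, s⟫])

noncomputable def cosKernel (z : Fin 4 → E × F) (s : E) (t : F) : ℝ :=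
  cosDiff ((z 0).1 - (z 3).1) ((z 3).1 - (z 1).1) s *
    cosDiff ((z 3).2 - (z 0).2) ((z 0).2 - (z 2).2) t

noncomputable def expKernel (z : Fin 4 → E × F) (s : E) (t : F) : ℂ :=
  expDiff ((z 0).1 - (z 3).1) ((z 3).1 - (z 1).1) s *
    expDiff ((z 3).2 - (z 0).2) ((z 0).2 - (z 2).2) t

lemma cosKernel_eq_re_expKernel (z : Fin 4 → E × F) (s : E) (t : F) :
    cosKernel z s t = ((expKernel z s t).re + (expKernel z s (-t)).re) / 2 := by
  simp only [cosKernel, expKernel, cosDiff_eq_re_expDiff, expDiff_neg, Complex.mul_re,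
    Complex.conj_re, Complex.conj_im]
  ring

lemma abs_cosKernel_le (z : Fin 4 → E × F) (s : E) (t : F) : |cosKernel z s t| ≤ 4 := by
  rw [cosKernel, abs_mul]
  exact (mul_le_mul (abs_cosDiff_le _ _ _) (abs_cosDiff_le _ _ _) (abs_nonneg _)
    zero_le_two).trans_eq (by norm_num)

noncomputable def piChar {ι : Type*} [Fintype ι] (σ : ι → E) (τ : ι → F) (z : ι → E × F) : ℂ :=
  Complex.exp (Complex.I * ((∑ k, (⟪σ k, (z k).1⟫ + ⟪τ k, (z k).2⟫) : ℝ)))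

lemma expKernel_eq_piChar (z : Fin 4 → E × F) (s : E) (t : F) :
    expKernel z s t
      = piChar ![s, 0, 0, -s] ![-t, 0, 0, t] z - piChar ![s, 0, 0, -s] ![t, 0, -t, 0] z
        - piChar ![0, -s, 0, s] ![-t, 0, 0, t] z + piChar ![0, -s, 0, s] ![t, 0, -t, 0] z := by
  have hx : ⟪(z 0).1 - (z 3).1, s⟫ = ∑ k, ⟪![s, 0, 0, -s] k, (z k).1⟫ := by
    simp [Fin.sum_univ_four, inner_sub_left, real_inner_comm]; ring
  have hx' : ⟪(z 3).1 - (z 1).1, s⟫ = ∑ k, ⟪![0, -s, 0, s] k, (z k).1⟫ := by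
    simp [Fin.sum_univ_four, inner_sub_left, real_inner_comm]; ring
  have hy : ⟪(z 3).2 - (z 0).2, t⟫ = ∑ k, ⟪![-t, 0, 0, t] k, (z k).2⟫ := by
    simp [Fin.sum_univ_four, inner_sub_left, real_inner_comm]; ring
  have hy' : ⟪(z 0).2 - (z 2).2, t⟫ = ∑ k, ⟪![t, 0, -t, 0] k, (z k).2⟫ := by
    simp [Fin.sum_univ_four, inner_sub_left, real_inner_comm]; ring
  simp only [expKernel, expDiff, hx, hx', hy, hy', piChar, Finset.sum_add_distrib,
    Complex.ofReal_add, mul_add, Complex.exp_add]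
  ring

variable [MeasurableSpace E] [MeasurableSpace F] (π : Measure (E × F))

noncomputable def pairCharFn (s : E) (t : F) : ℂ :=
  ∫ p, Complex.exp (Complex.I * ((⟪s, p.1⟫ + ⟪t, p.2⟫ : ℝ))) ∂π

noncomputable def charCov (s : E) (t : F) : ℂ :=
  pairCharFn π s t - pairCharFn π s 0 * pairCharFn π 0 t

lemma pairCharFn_neg_neg (s : E) (t : F) :
    pairCharFn π (-s) (-t) = conj (pairCharFn π s t) := by
  simp only [pairCharFn, ← integral_conj, ← Complex.exp_conj, map_mul, Complex.conj_I,
    Complex.conj_ofReal, inner_neg_left]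
  congr with p
  push_cast
  ring_nf

lemma pairCharFn_zero_zero [IsProbabilityMeasure π] : pairCharFn π 0 0 = 1 := by
  simp [pairCharFn]

lemma norm_pairCharFn_le [IsProbabilityMeasure π] (s : E) (t : F) : ‖pairCharFn π s t‖ ≤ 1 :=
  (norm_integral_le_of_norm_le_const (C := 1)
    (ae_of_all _ fun _ => (Complex.norm_exp_I_mul_ofReal _).le)).trans_eq (by simp)

lemma norm_charCov_le [IsProbabilityMeasure π] (s : E) (t : F) : ‖charCov π s t‖ ≤ 2 :=
  calc ‖charCov π s t‖ ≤ ‖pairCharFn π s t‖ + ‖pairCharFn π s 0‖ * ‖pairCharFn π 0 t‖ :=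
        (norm_sub_le _ _).trans_eq (by rw [norm_mul])
  _ ≤ 1 + 1 * 1 := by gcongr <;> exact norm_pairCharFn_le π _ _
  _ = 2 := by norm_num

lemma integral_piChar {ι : Type*} [Fintype ι] [SigmaFinite π] (σ : ι → E) (τ : ι → F) :
    ∫ z, piChar σ τ z ∂(Measure.pi fun _ => π) = ∏ k, pairCharFn π (σ k) (τ k) := by
  simp_rw [piChar, Complex.ofReal_sum, Finset.mul_sum, Complex.exp_sum]
  exact integral_fintype_prod_eq_prod
    (fun k (p : E × F) => Complex.exp (Complex.I * ((⟪σ k, p.1⟫ + ⟪τ k, p.2⟫ : ℝ))))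

variable [BorelSpace E] [SecondCountableTopology E] [BorelSpace F] [SecondCountableTopology F]

lemma measurable_pairCharFn [SFinite π] :
    Measurable fun q : E × F => pairCharFn π q.1 q.2 := by
  have h : Measurable fun r : (E × F) × (E × F) =>
      Complex.exp (Complex.I * ((⟪r.1.1, r.2.1⟫ + ⟪r.1.2, r.2.2⟫ : ℝ))) := by fun_prop
  exact h.stronglyMeasurable.integral_prod_right'.measurable

lemma measurable_charCov [SFinite π] : Measurable fun q : E × F => charCov π q.1 q.2 := by
  have h := measurable_pairCharFn π
  exact h.sub ((h.comp (measurable_fst.prodMk measurable_const)).mul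
    (h.comp (measurable_const.prodMk measurable_snd)))

lemma integrable_norm_charCov_sq [IsProbabilityMeasure π] (ρ : Measure (E × F))
    [IsFiniteMeasure ρ] : Integrable (fun q => ‖charCov π q.1 q.2‖ ^ 2) ρ :=
  Integrable.of_bound ((measurable_charCov π).norm.pow_const 2).aestronglyMeasurable 4
    (ae_of_all _ fun q => by
      rw [Real.norm_eq_abs, abs_of_nonneg (sq_nonneg _)]
      nlinarith [norm_charCov_le π q.1 q.2, norm_nonneg (charCov π q.1 q.2)])

lemma integrable_piChar {ι : Type*} [Fintype ι] [IsFiniteMeasure π] (σ : ι → E) (τ : ι → F) :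
    Integrable (piChar σ τ) (Measure.pi fun _ => π) :=
  Integrable.of_bound (by unfold piChar; fun_prop) 1
    (ae_of_all _ fun _ => (Complex.norm_exp_I_mul_ofReal _).le)

lemma integrable_cosKernel (ρ : Measure ((Fin 4 → E × F) × (E × F))) [IsFiniteMeasure ρ] :
    Integrable (fun p => cosKernel p.1 p.2.1 p.2.2) ρ :=
  Integrable.of_bound (by unfold cosKernel cosDiff; fun_prop) 4
    (ae_of_all _ fun p => abs_cosKernel_le p.1 p.2.1 p.2.2)

lemma integrable_expKernel [IsFiniteMeasure π] (s : E) (t : F) :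
    Integrable (fun z => expKernel z s t) (Measure.pi fun _ => π) := by
  have h := integrable_piChar π (ι := Fin 4)
  simp_rw [expKernel_eq_piChar]
  exact (((h _ _).sub' (h _ _)).sub' (h _ _)).fun_add (h _ _)

variable [IsProbabilityMeasure π]

lemma integral_expKernel (s : E) (t : F) :
    ∫ z, expKernel z s t ∂(Measure.pi fun _ => π) =
      pairCharFn π s (-t) * conj (pairCharFn π s (-t))
        - 2 * (pairCharFn π s t * conj (pairCharFn π s 0 * pairCharFn π 0 t))
        + pairCharFn π s 0 * pairCharFn π 0 t * conj (pairCharFn π s 0 * pairCharFn π 0 t) := by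
  have h := integrable_piChar π (ι := Fin 4)
  have hs0 : pairCharFn π (-s) 0 = conj (pairCharFn π s 0) := by
    simpa using pairCharFn_neg_neg π s 0
  have h0t : pairCharFn π 0 (-t) = conj (pairCharFn π 0 t) := by
    simpa using pairCharFn_neg_neg π 0 t
  have hst : pairCharFn π (-s) t = conj (pairCharFn π s (-t)) := by
    simpa using pairCharFn_neg_neg π s (-t)
  simp_rw [expKernel_eq_piChar]
  rw [integral_add (((h _ _).sub' (h _ _)).sub' (h _ _)) (h _ _),
    integral_sub ((h _ _).sub' (h _ _)) (h _ _), integral_sub (h _ _) (h _ _)]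
  simp only [integral_piChar, Fin.prod_univ_four, Matrix.cons_val_zero, Matrix.cons_val_one,
    Matrix.cons_val_two, Matrix.cons_val_three, Matrix.head_cons, Matrix.tail_cons,
    pairCharFn_zero_zero, hs0, h0t, hst, map_mul]
  ring

lemma re_integral_expKernel (s : E) (t : F) :
    (∫ z, expKernel z s t ∂(Measure.pi fun _ => π)).re
      = ‖charCov π s t‖ ^ 2 + ‖pairCharFn π s (-t)‖ ^ 2 - ‖pairCharFn π s t‖ ^ 2 := by
  simp only [integral_expKernel, charCov, Complex.sq_norm, Complex.normSq_apply, Complex.add_re,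
    Complex.sub_re, Complex.mul_re, Complex.mul_im, Complex.sub_im, Complex.conj_re,
    Complex.conj_im, Complex.re_ofNat, Complex.im_ofNat]
  ring

lemma integral_cosKernel (s : E) (t : F) :
    ∫ z, cosKernel z s t ∂(Measure.pi fun _ => π)
      = (‖charCov π s t‖ ^ 2 + ‖charCov π s (-t)‖ ^ 2) / 2 := by
  have hint (t : F) : Integrable (fun z => (expKernel z s t).re) (Measure.pi fun _ => π) :=
    (integrable_expKernel π s t).re
  have hre (t : F) : ∫ z, (expKernel z s t).re ∂(Measure.pi fun _ => π)
      = (∫ z, expKernel z s t ∂(Measure.pi fun _ => π)).re :=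
    integral_re (integrable_expKernel π s t)
  simp_rw [cosKernel_eq_re_expKernel]
  rw [integral_div, integral_add (hint t) (hint (-t)), hre, hre, re_integral_expKernel,
    re_integral_expKernel, neg_neg]
  ring

theorem integral_norm_charCov_sq_eq_integral_cosKernel (μ : Measure E) (ν : Measure F)
    [IsFiniteMeasure μ] [IsFiniteMeasure ν] [ν.IsNegInvariant] :
    ∫ q, ‖charCov π q.1 q.2‖ ^ 2 ∂(μ.prod ν)
      = ∫ z, ∫ q, cosKernel z q.1 q.2 ∂(μ.prod ν) ∂(Measure.pi fun _ => π) := by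
  have hneg : MeasurePreserving (Prod.map id Neg.neg) (μ.prod ν) (μ.prod ν) :=
    (MeasurePreserving.id μ).prod (Measure.measurePreserving_neg ν)
  have hemb : MeasurableEmbedding (Prod.map (id : E → E) (Neg.neg : F → F)) :=
    ((MeasurableEquiv.refl E).prodCongr (MeasurableEquiv.neg F)).measurableEmbedding
  have hint := integrable_norm_charCov_sq π (μ.prod ν)
  have hint_neg : Integrable (fun q : E × F => ‖charCov π q.1 (-q.2)‖ ^ 2) (μ.prod ν) :=
    (hneg.integrable_comp_emb hemb).mpr hint
  have hsymm : ∫ q, ‖charCov π q.1 (-q.2)‖ ^ 2 ∂(μ.prod ν)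
      = ∫ q, ‖charCov π q.1 q.2‖ ^ 2 ∂(μ.prod ν) :=
    hneg.integral_comp hemb (fun q => ‖charCov π q.1 q.2‖ ^ 2)
  rw [integral_integral_swap (integrable_cosKernel _)]
  simp_rw [integral_cosKernel]
  rw [integral_div, integral_add hint hint_neg, hsymm]
  ring

end

section Euclidean

variable {m n : ℕ}

lemma measurable_realCndf {d : ℕ} (ρ : Measure (EuclideanSpace ℝ (Fin d))) [SFinite ρ] :
    Measurable (realCndf ρ) := by
  have h : Measurable fun q : EuclideanSpace ℝ (Fin d) × EuclideanSpace ℝ (Fin d) =>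
      1 - Real.cos ⟪q.1, q.2⟫ := by fun_prop
  exact h.stronglyMeasurable.integral_prod_right'.measurable

lemma integral_cosDiff {d : ℕ} (ρ : Measure (EuclideanSpace ℝ (Fin d))) [IsFiniteMeasure ρ]
    (a b : EuclideanSpace ℝ (Fin d)) :
    ∫ s, cosDiff a b s ∂ρ = realCndf ρ b - realCndf ρ a := by
  have hcos (c : EuclideanSpace ℝ (Fin d)) : Integrable (fun s => Real.cos ⟪c, s⟫) ρ :=
    Integrable.of_bound (by fun_prop) 1 (ae_of_all _ fun s => Real.abs_cos_le_one _)
  simp only [cosDiff, realCndf]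
  rw [integral_sub (hcos a) (hcos b), integral_sub (integrable_const 1) (hcos b),
    integral_sub (integrable_const 1) (hcos a)]
  ring

lemma integral_prod_cosKernel (μ : Measure (EuclideanSpace ℝ (Fin m)))
    (ν : Measure (EuclideanSpace ℝ (Fin n))) [IsFiniteMeasure μ] [IsFiniteMeasure ν]
    (z : Fin 4 → EuclideanSpace ℝ (Fin m) × EuclideanSpace ℝ (Fin n)) :
    ∫ q, cosKernel z q.1 q.2 ∂(μ.prod ν)
      = (realCndf μ ((z 0).1 - (z 3).1) - realCndf μ ((z 3).1 - (z 1).1))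
        * (realCndf ν ((z 3).2 - (z 0).2) - realCndf ν ((z 0).2 - (z 2).2)) := by
  simp only [cosKernel]
  rw [integral_prod_mul, integral_cosDiff, integral_cosDiff]
  ring

variable {Ω : Type*} [MeasurableSpace Ω] {P : Measure Ω}
  {X : Ω → EuclideanSpace ℝ (Fin m)} {Y : Ω → EuclideanSpace ℝ (Fin n)}
  {π : Measure (EuclideanSpace ℝ (Fin m) × EuclideanSpace ℝ (Fin n))}

lemma jointCharFn_eq_pairCharFn (hXY : HasLaw (fun ω => (X ω, Y ω)) π P)
    (s : EuclideanSpace ℝ (Fin m)) (t : EuclideanSpace ℝ (Fin n)) :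
    jointCharFn P X Y s t = pairCharFn π s t :=
  hXY.integral_comp (f := fun p => Complex.exp (Complex.I * ((⟪s, p.1⟫ + ⟪t, p.2⟫ : ℝ))))
    (by fun_prop)

lemma charFn_eq_jointCharFn_zero_right (s : EuclideanSpace ℝ (Fin m)) :
    charFn P X s = jointCharFn P X Y s 0 := by
  simp [charFn, jointCharFn]

lemma charFn_eq_jointCharFn_zero_left (t : EuclideanSpace ℝ (Fin n)) :
    charFn P Y t = jointCharFn P X Y 0 t := by
  simp [charFn, jointCharFn]

lemma gdCov_toReal_eq (μ : Measure (EuclideanSpace ℝ (Fin m)))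
    (ν : Measure (EuclideanSpace ℝ (Fin n))) [IsFiniteMeasure μ] [IsFiniteMeasure ν]
    [IsProbabilityMeasure π] (hXY : HasLaw (fun ω => (X ω, Y ω)) π P) :
    (gdCov μ ν P X Y).toReal = ∫ q, ‖charCov π q.1 q.2‖ ^ 2 ∂(μ.prod ν) := by
  have hD (s t) : (‖jointCharFn P X Y s t - charFn P X s * charFn P Y t‖₊ : ℝ≥0∞) ^ 2
      = ENNReal.ofReal (‖charCov π s t‖ ^ 2) := by
    rw [charFn_eq_jointCharFn_zero_right (Y := Y), charFn_eq_jointCharFn_zero_left (X := X),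
      jointCharFn_eq_pairCharFn hXY, jointCharFn_eq_pairCharFn hXY,
      jointCharFn_eq_pairCharFn hXY, ← enorm_eq_nnnorm, ← ofReal_norm,
      ← ENNReal.ofReal_pow (norm_nonneg _), charCov]
  have hint := integrable_norm_charCov_sq π (μ.prod ν)
  simp_rw [gdCov, hD]
  rw [← lintegral_prod _ hint.aemeasurable.ennreal_ofReal,
    ← ofReal_integral_eq_lintegral_ofReal hint (ae_of_all _ fun _ => sq_nonneg _),
    ENNReal.toReal_ofReal (integral_nonneg fun _ => sq_nonneg _)]

end Euclidean

theorem gdCov_eq_product_expectation_general {m n : ℕ}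
    (μ : Measure (EuclideanSpace ℝ (Fin m))) (ν : Measure (EuclideanSpace ℝ (Fin n)))
    [IsFiniteMeasure μ] [IsFiniteMeasure ν]
    (hνsym : IsSymmetricMeasure ν)
    {Ω : Type*} [MeasurableSpace Ω] (P : Measure Ω) [IsProbabilityMeasure P]
    (X : Ω → EuclideanSpace ℝ (Fin m)) (Y : Ω → EuclideanSpace ℝ (Fin n))
    (X' : Fin 4 → Ω → EuclideanSpace ℝ (Fin m))
    (Y' : Fin 4 → Ω → EuclideanSpace ℝ (Fin n))
    (hiid : iIndepFun (fun i ω => (X' i ω, Y' i ω)) P)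
    (hid : ∀ i, IdentDistrib (fun ω => (X' i ω, Y' i ω)) (fun ω => (X ω, Y ω)) P P) :
    (gdCov μ ν P X Y).toReal
      = ∫ ω, (realCndf μ (X' 0 ω - X' 3 ω) - realCndf μ (X' 3 ω - X' 1 ω))
          * (realCndf ν (Y' 3 ω - Y' 0 ω) - realCndf ν (Y' 0 ω - Y' 2 ω)) ∂P := by
  set π := P.map fun ω => (X ω, Y ω)
  have hXY : HasLaw (fun ω => (X ω, Y ω)) π P := ⟨(hid 0).aemeasurable_snd, rfl⟩
  have hZ : HasLaw (fun ω i => (X' i ω, Y' i ω)) (Measure.pi fun _ => π) P :=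
    hiid.hasLaw_pi fun i => (hid i).symm.hasLaw hXY
  have : IsProbabilityMeasure π := hXY.isProbabilityMeasure_iff.1 ‹_›
  have : ν.IsNegInvariant := ⟨hνsym⟩
  have hΦ := measurable_realCndf μ
  have hΨ := measurable_realCndf ν
  rw [gdCov_toReal_eq μ ν hXY, integral_norm_charCov_sq_eq_integral_cosKernel]
  simp_rw [integral_prod_cosKernel]
  rw [← hZ.map_eq, integral_map hZ.aemeasurable (by fun_prop)]

/-- For finite symmetric Lévy measures `μ, ν` with full support and i.i.d. copies
`(X_i, Y_i)`, `i = 1, …, 4`, of `(X, Y)` (below indexed `0, …, 3`), the generalized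
distance covariance satisfies
`V²(X,Y) = E[(Φ(X₁-X₄) - Φ(X₄-X₂)) · (Ψ(Y₄-Y₁) - Ψ(Y₁-Y₃))]`. -/
theorem gdCov_eq_product_expectation {m n : ℕ}
    (μ : Measure (EuclideanSpace ℝ (Fin m))) (ν : Measure (EuclideanSpace ℝ (Fin n)))
    [IsFiniteMeasure μ] [IsFiniteMeasure ν]
    (hμ0 : μ {0} = 0) (hν0 : ν {0} = 0)
    (hμsym : IsSymmetricMeasure μ) (hνsym : IsSymmetricMeasure ν)
    (hμfull : HasFullSupportOffZero μ) (hνfull : HasFullSupportOffZero ν)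
    {Ω : Type*} [MeasurableSpace Ω] (P : Measure Ω) [IsProbabilityMeasure P]
    (X : Ω → EuclideanSpace ℝ (Fin m)) (Y : Ω → EuclideanSpace ℝ (Fin n))
    (hX : Measurable X) (hY : Measurable Y)
    (X' : Fin 4 → Ω → EuclideanSpace ℝ (Fin m))
    (Y' : Fin 4 → Ω → EuclideanSpace ℝ (Fin n))
    (hX' : ∀ i, Measurable (X' i)) (hY' : ∀ i, Measurable (Y' i))
    (hiid : iIndepFun (fun i ω => (X' i ω, Y' i ω)) P)
    (hid : ∀ i, IdentDistrib (fun ω => (X' i ω, Y' i ω)) (fun ω => (X ω, Y ω)) P P) :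
    (gdCov μ ν P X Y).toReal
      = ∫ ω, (realCndf μ (X' 0 ω - X' 3 ω) - realCndf μ (X' 3 ω - X' 1 ω))
          * (realCndf ν (Y' 3 ω - Y' 0 ω) - realCndf ν (Y' 0 ω - Y' 2 ω)) ∂P :=
  gdCov_eq_product_expectation_general μ ν hνsym P X Y X' Y' hiid hid
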